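/- Let $Y_1, Y_2, \dots, Y_n$ be independent real random variables with mean zero and let $p\in[1,2]$. Then $\mathbb{E}\bigl|\sum_{i=1}^n Y_i\bigr|^p \le 2^p \sum_{i=1}^n \mathbb{E}|Y_i|^p$. -/

import Mathlib

/-!
For `1 ≤ p ≤ 2` and reals `a, b` one has the first-order expansion
`|a + b| ^ p ≤ |a| ^ p + p * sign a * |a| ^ (p - 1) * b + 2 * |b| ^ p`: for `p > 1` this is
Taylor's formula for `t ↦ |a + t b| ^ p` together with the `(p - 1)`-Hölder continuity of its
derivative, and `p = 1` is the triangle inequality. If `X` and `Y` are independent and `Y` is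
centred, the linear term has zero expectation, so `E|X + Y| ^ p ≤ E|X| ^ p + 2 E|Y| ^ p`.
Induction over the summands gives the bound with constant `2 ≤ 2 ^ p`.
-/

open MeasureTheory ProbabilityTheory

/-- `signedRpow α x = sign x * |x| ^ α`; it is written so that `p * signedRpow (p - 1)` is
literally Mathlib's derivative of `|x| ^ p`. -/
noncomputable def signedRpow (α x : ℝ) : ℝ := |x| ^ (α - 1) * x

section signedRpow

variable {α : ℝ}

lemma signedRpow_of_nonneg (hα : 0 < α) {x : ℝ} (hx : 0 ≤ x) : signedRpow α x = x ^ α := by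
  rcases hx.eq_or_lt with rfl | hx
  · simp [signedRpow, Real.zero_rpow hα.ne']
  · rw [signedRpow, abs_of_pos hx, Real.rpow_sub_one hx.ne', div_mul_cancel₀ _ hx.ne']

lemma signedRpow_neg (x : ℝ) : signedRpow α (-x) = -signedRpow α x := by
  simp [signedRpow]

lemma abs_signedRpow_le (x : ℝ) : |signedRpow α x| ≤ |x| ^ α := by
  rcases eq_or_ne x 0 with rfl | hx
  · simp [signedRpow, Real.rpow_nonneg le_rfl]
  · rw [signedRpow, abs_mul, abs_of_nonneg (Real.rpow_nonneg (abs_nonneg x) _),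
      Real.rpow_sub_one (abs_pos.2 hx).ne', div_mul_cancel₀ _ (abs_pos.2 hx).ne']

lemma measurable_signedRpow : Measurable (signedRpow α) := by
  unfold signedRpow; fun_prop

lemma hasDerivAt_abs_rpow_signedRpow {p : ℝ} (hp : 1 < p) (x : ℝ) :
    HasDerivAt (fun x : ℝ ↦ |x| ^ p) (p * signedRpow (p - 1) x) x := by
  convert hasDerivAt_abs_rpow x hp using 1
  rw [signedRpow, sub_sub, one_add_one_eq_two, mul_assoc]

lemma continuous_signedRpow (hα : 0 < α) : Continuous (signedRpow α) := by
  have hderiv :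
      deriv (fun x : ℝ ↦ ‖x‖ ^ (α + 1)) = fun x ↦ (α + 1) * signedRpow α x := by
    funext x
    simpa using (hasDerivAt_abs_rpow_signedRpow (p := α + 1) (by linarith) x).deriv
  have h := ((contDiff_norm_rpow (E := ℝ) (p := α + 1) (by linarith)).continuous_deriv
    le_rfl).const_mul (α + 1)⁻¹
  rw [hderiv] at h
  convert h using 2 with x
  field_simp

/-- Subadditivity of `t ↦ t ^ α` handles arguments of equal sign; for opposite signs each
term is at most `|x - y| ^ α`. -/
lemma abs_signedRpow_sub_le (hα0 : 0 < α) (hα1 : α ≤ 1) (x y : ℝ) :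
    |signedRpow α x - signedRpow α y| ≤ 2 * |x - y| ^ α := by
  have of_nonneg : ∀ {x y : ℝ}, 0 ≤ y → y ≤ x →
      |signedRpow α x - signedRpow α y| ≤ 2 * |x - y| ^ α := by
    intro x y hy hyx
    have hsub := Real.rpow_add_le_add_rpow (sub_nonneg.2 hyx) hy hα0.le hα1
    rw [sub_add_cancel] at hsub
    rw [signedRpow_of_nonneg hα0 (hy.trans hyx), signedRpow_of_nonneg hα0 hy,
      abs_of_nonneg (sub_nonneg.2 (Real.rpow_le_rpow hy hyx hα0.le)),
      abs_of_nonneg (sub_nonneg.2 hyx)]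
    linarith [Real.rpow_nonneg (sub_nonneg.2 hyx) α]
  wlog hyx : y ≤ x generalizing x y
  · rw [abs_sub_comm, abs_sub_comm x]; exact this y x (le_of_not_ge hyx)
  rcases le_total 0 y with hy | hy
  · exact of_nonneg hy hyx
  rcases le_total x 0 with hx | hx
  · simpa [signedRpow_neg, abs_sub_comm, sub_eq_add_neg, add_comm] using
      of_nonneg (neg_nonneg.2 hx) (neg_le_neg hyx)
  have hxy : |x - y| = x - y := abs_of_nonneg (sub_nonneg.2 hyx)
  have hx' : x ^ α ≤ (x - y) ^ α := Real.rpow_le_rpow hx (by linarith) hα0.le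
  have hy' : (-y) ^ α ≤ (x - y) ^ α := Real.rpow_le_rpow (by linarith) (by linarith) hα0.le
  rw [← neg_neg y, signedRpow_neg, signedRpow_of_nonneg hα0 hx,
    signedRpow_of_nonneg hα0 (neg_nonneg.2 hy), neg_neg, hxy, sub_neg_eq_add,
    abs_of_nonneg (add_nonneg (Real.rpow_nonneg hx α) (Real.rpow_nonneg (neg_nonneg.2 hy) α))]
  linarith

lemma signedRpow_add_mul_le (hα0 : 0 < α) (hα1 : α ≤ 1) (a b : ℝ) {t : ℝ} (ht : 0 ≤ t) :
    signedRpow α (a + t * b) * b ≤ signedRpow α a * b + 2 * |b| ^ (α + 1) * t ^ α := by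
  have hholder : |signedRpow α (a + t * b) - signedRpow α a| ≤ 2 * (t ^ α * |b| ^ α) := by
    simpa [abs_mul, abs_of_nonneg ht, Real.mul_rpow ht (abs_nonneg b)] using
      abs_signedRpow_sub_le hα0 hα1 (a + t * b) a
  calc signedRpow α (a + t * b) * b
      = signedRpow α a * b + (signedRpow α (a + t * b) - signedRpow α a) * b := by ring
    _ ≤ signedRpow α a * b + |signedRpow α (a + t * b) - signedRpow α a| * |b| := by
        rw [← abs_mul]; gcongr; exact le_abs_self _
    _ ≤ signedRpow α a * b + 2 * (t ^ α * |b| ^ α) * |b| := by gcongr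
    _ = signedRpow α a * b + 2 * |b| ^ (α + 1) * t ^ α := by
        rw [Real.rpow_add_one' (abs_nonneg b) (by linarith)]; ring

end signedRpow

/-- Taylor's formula for `t ↦ |a + t * b| ^ p` on `[0, 1]`; the factor `p` of the derivative
cancels against `∫ t ^ (p - 1) = 1 / p`. -/
lemma abs_add_rpow_le_of_one_lt {p : ℝ} (hp1 : 1 < p) (hp2 : p ≤ 2) (a b : ℝ) :
    |a + b| ^ p ≤ |a| ^ p + p * signedRpow (p - 1) a * b + 2 * |b| ^ p := by
  set α := p - 1 with hα
  have hα0 : 0 < α := by linarith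
  have hline : ∀ t : ℝ, HasDerivAt (fun t ↦ a + t * b) b t := fun t ↦ by
    simpa using ((hasDerivAt_id t).mul_const b).const_add a
  have hcont : Continuous fun t : ℝ ↦ p * signedRpow α (a + t * b) * b := by
    have := continuous_signedRpow hα0
    fun_prop
  have hFTC : ∫ t in (0 : ℝ)..1, p * signedRpow α (a + t * b) * b = |a + b| ^ p - |a| ^ p := by
    simpa using intervalIntegral.integral_eq_sub_of_hasDerivAt
      (fun t _ ↦ (hasDerivAt_abs_rpow_signedRpow hp1 _).comp t (hline t))
      (hcont.intervalIntegrable 0 1)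
  have hbound : ∀ t ∈ Set.Icc (0 : ℝ) 1,
      p * signedRpow α (a + t * b) * b ≤ p * signedRpow α a * b + 2 * p * |b| ^ p * t ^ α := by
    rintro t ⟨ht, -⟩
    have := mul_le_mul_of_nonneg_left (signedRpow_add_mul_le hα0 (by linarith) a b ht)
      (by linarith : (0 : ℝ) ≤ p)
    rw [hα, sub_add_cancel] at this
    linarith
  have hrpow : IntervalIntegrable (fun t : ℝ ↦ 2 * p * |b| ^ p * t ^ α) volume 0 1 :=
    (intervalIntegral.intervalIntegrable_rpow' (by linarith)).const_mul _
  have hmono := intervalIntegral.integral_mono_on zero_le_one (hcont.intervalIntegrable 0 1)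
    (intervalIntegrable_const.add hrpow) hbound
  rw [hFTC, intervalIntegral.integral_add intervalIntegrable_const hrpow,
    intervalIntegral.integral_const, intervalIntegral.integral_const_mul,
    integral_rpow (Or.inl (by linarith)), Real.one_rpow, Real.zero_rpow (by linarith), hα,
    sub_add_cancel] at hmono
  simp only [sub_zero, one_smul] at hmono
  have hcancel : 2 * p * |b| ^ p * (1 / p) = 2 * |b| ^ p := by field_simp
  linarith

lemma abs_add_rpow_le {p : ℝ} (hp1 : 1 ≤ p) (hp2 : p ≤ 2) (a b : ℝ) :
    |a + b| ^ p ≤ |a| ^ p + p * signedRpow (p - 1) a * b + 2 * |b| ^ p := by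
  rcases hp1.eq_or_lt with rfl | hp1
  · have hsign : |signedRpow 0 a * b| ≤ |b| := by
      simpa [abs_mul] using
        mul_le_mul_of_nonneg_right (abs_signedRpow_le (α := 0) a) (abs_nonneg b)
    simp only [sub_self, Real.rpow_one, one_mul]
    linarith [abs_add_le a b, neg_abs_le (signedRpow 0 a * b)]
  · exact abs_add_rpow_le_of_one_lt hp1 hp2 a b

section Expectation

variable {Ω : Type*} [MeasurableSpace Ω] {P : Measure Ω} [IsFiniteMeasure P] {p : ℝ}

lemma MeasureTheory.MemLp.integrable_abs_rpow {X : Ω → ℝ} (hp : 0 < p)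
    (hX : MemLp X (ENNReal.ofReal p) P) :
    Integrable (fun ω ↦ |X ω| ^ p) P := by
  simpa [ENNReal.toReal_ofReal hp.le, Real.norm_eq_abs] using hX.integrable_norm_rpow'

lemma MeasureTheory.MemLp.integrable_signedRpow {X : Ω → ℝ} (hp : 1 ≤ p)
    (hX : MemLp X (ENNReal.ofReal p) P) :
    Integrable (fun ω ↦ signedRpow (p - 1) (X ω)) P := by
  have hX' : MemLp X (ENNReal.ofReal (p - 1)) P :=
    hX.mono_exponent (ENNReal.ofReal_le_ofReal (by linarith))
  refine (hX'.integrable_norm_rpow').mono'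
    (measurable_signedRpow.comp_aemeasurable hX.aemeasurable).aestronglyMeasurable
    (ae_of_all _ fun ω ↦ ?_)
  simpa [ENNReal.toReal_ofReal (by linarith : 0 ≤ p - 1)] using
    abs_signedRpow_le (α := p - 1) (X ω)

lemma integral_abs_add_rpow_le {X Y : Ω → ℝ} (hp1 : 1 ≤ p) (hp2 : p ≤ 2)
    (hXY : IndepFun X Y P) (hX : MemLp X (ENNReal.ofReal p) P) (hY : MemLp Y (ENNReal.ofReal p) P)
    (hY0 : ∫ ω, Y ω ∂P = 0) :
    ∫ ω, |X ω + Y ω| ^ p ∂P ≤ ∫ ω, |X ω| ^ p ∂P + 2 * ∫ ω, |Y ω| ^ p ∂P := by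
  have hp0 : 0 < p := by linarith
  have hYint : Integrable Y P := hY.integrable (ENNReal.one_le_ofReal.2 hp1)
  have hind : IndepFun (fun ω ↦ signedRpow (p - 1) (X ω)) Y P :=
    hXY.comp₀ hX.aemeasurable hY.aemeasurable measurable_signedRpow.aemeasurable aemeasurable_id
  have hlin : Integrable (fun ω ↦ signedRpow (p - 1) (X ω) * Y ω) P :=
    hind.integrable_mul (hX.integrable_signedRpow hp1) hYint
  have hlin0 : ∫ ω, signedRpow (p - 1) (X ω) * Y ω ∂P = 0 := by
    have := hind.integral_mul_eq_mul_integral (hX.integrable_signedRpow hp1).1 hYint.1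
    simpa only [Pi.mul_apply, hY0, mul_zero] using this
  have hXi := hX.integrable_abs_rpow hp0
  have hYi := hY.integrable_abs_rpow hp0
  have hXlin : Integrable (fun ω ↦ |X ω| ^ p + p * (signedRpow (p - 1) (X ω) * Y ω)) P :=
    hXi.add (hlin.const_mul p)
  calc ∫ ω, |X ω + Y ω| ^ p ∂P
      ≤ ∫ ω, |X ω| ^ p + p * (signedRpow (p - 1) (X ω) * Y ω) + 2 * |Y ω| ^ p ∂P := by
        refine integral_mono ((hX.add hY).integrable_abs_rpow hp0)
          (hXlin.add (hYi.const_mul 2)) fun ω ↦ ?_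
        simpa only [mul_assoc] using abs_add_rpow_le hp1 hp2 (X ω) (Y ω)
    _ = ∫ ω, |X ω| ^ p ∂P + 2 * ∫ ω, |Y ω| ^ p ∂P := by
        rw [integral_add hXlin (hYi.const_mul 2),
          integral_add hXi (hlin.const_mul p), integral_const_mul, integral_const_mul, hlin0,
          mul_zero, add_zero]

lemma integral_abs_sum_rpow_le {ι : Type*} {Y : ι → Ω → ℝ} (hp1 : 1 ≤ p) (hp2 : p ≤ 2)
    (hY : iIndepFun Y P) (hmem : ∀ i, MemLp (Y i) (ENNReal.ofReal p) P)
    (hmean : ∀ i, ∫ ω, Y i ω ∂P = 0) (s : Finset ι) :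
    ∫ ω, |∑ i ∈ s, Y i ω| ^ p ∂P ≤ 2 * ∑ i ∈ s, ∫ ω, |Y i ω| ^ p ∂P := by
  classical
  induction s using Finset.induction_on with
  | empty => simp [Real.zero_rpow (by linarith : p ≠ 0)]
  | @insert i s hi ih =>
    have hind : IndepFun (fun ω ↦ ∑ j ∈ s, Y j ω) (Y i) P := by
      simpa only [Finset.sum_fn] using
        hY.indepFun_finsetSum_of_notMem₀ (fun j ↦ (hmem j).aemeasurable) hi
    have hstep := integral_abs_add_rpow_le hp1 hp2 hind (memLp_finsetSum s fun j _ ↦ hmem j)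
      (hmem i) (hmean i)
    simp only [Finset.sum_insert hi, add_comm (Y i _)]
    linarith

end Expectation

theorem stmt3 {Ω : Type*} [MeasurableSpace Ω] (P : Measure Ω) [IsProbabilityMeasure P]
    (n : ℕ) (Y : Fin n → Ω → ℝ)
    (hindep : iIndepFun Y P)
    (p : ℝ) (hp1 : 1 ≤ p) (hp2 : p ≤ 2)
    (hmem : ∀ i, MemLp (Y i) (ENNReal.ofReal p) P)
    (hmean : ∀ i, ∫ ω, Y i ω ∂P = 0) :
    ∫ ω, |∑ i, Y i ω| ^ p ∂P ≤ 2 ^ p * ∑ i, ∫ ω, |Y i ω| ^ p ∂P := by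
  have htwo : (2 : ℝ) ≤ 2 ^ p := by
    simpa using Real.rpow_le_rpow_of_exponent_le one_le_two hp1
  calc ∫ ω, |∑ i, Y i ω| ^ p ∂P ≤ 2 * ∑ i, ∫ ω, |Y i ω| ^ p ∂P :=
        integral_abs_sum_rpow_le hp1 hp2 hindep hmem hmean Finset.univ
    _ ≤ 2 ^ p * ∑ i, ∫ ω, |Y i ω| ^ p ∂P := by
        gcongr
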